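/- arXiv:2605.14285 — 2 statements merged into one kernel-verified Lean document; each statement's English description precedes it below -/
import Mathlib

section
/- For every integer u ≥ 1 (the fixed-lag smoothing regime) and every iteration index ℓ ≥ 0, the number of concurrently active frames is bounded by the lag window: the cardinality of the set {k ∈ {1, …, K} : 0 < S(k, ℓ) < T} is at most ⌈T/u⌉. -/
/-- The ForcingDAS scheduling matrix: for total diffusion steps `T`, uncertainty
scale `u`, frame index `k`, and iteration index `ℓ`,
`S T u k ℓ = min (max (T - ℓ + u * (k - 1)) 0) T`. -/
def forcingDAS_S (T u k ℓ : ℤ) : ℤ :=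
  min (max (T - ℓ + u * (k - 1)) 0) T

/-- For `u ≥ 1` (fixed-lag smoothing), at every iteration the number of
concurrently active frames (those at a strictly intermediate diffusion step) is
at most the lag window `⌈T / u⌉`. -/
theorem forcingDAS_active_window_bound (T K u : ℤ)
    (hT : 1 ≤ T) (hK : 1 ≤ K) (hu : 1 ≤ u) :
    ∀ ℓ : ℤ, 0 ≤ ℓ →
      (((Finset.Icc (1 : ℤ) K).filter
          (fun k => 0 < forcingDAS_S T u k ℓ ∧ forcingDAS_S T u k ℓ < T)).card : ℤ)
        ≤ ⌈(T : ℚ) / (u : ℚ)⌉ := by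
  intro ℓ hℓ
  have hu0 : (0 : ℚ) < (u : ℚ) := by exact_mod_cast lt_of_lt_of_le zero_lt_one hu
  set c : ℤ := ⌈(ℓ : ℚ) / (u : ℚ)⌉ with hc
  set f : ℤ := ⌊((ℓ - T : ℤ) : ℚ) / (u : ℚ)⌋ with hf
  have hsub : ((Finset.Icc (1 : ℤ) K).filter
      (fun k => 0 < forcingDAS_S T u k ℓ ∧ forcingDAS_S T u k ℓ < T))
      ⊆ Finset.Icc (f + 2) c := by
    intro k hk
    replace hk := Finset.mem_filter.mp hk
    simp only [Finset.mem_filter, Finset.mem_Icc, forcingDAS_S] at hk ⊢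
    obtain ⟨-, h1, h2⟩ := hk
    rw [lt_min_iff, lt_max_iff] at h1
    rw [min_lt_iff] at h2
    have h2' : max (T - ℓ + u * (k - 1)) 0 < T := by
      rcases h2 with h | h
      · exact h
      · exact absurd h (lt_irrefl T)
    rw [max_lt_iff] at h2'
    have ha : 0 < T - ℓ + u * (k - 1) := by
      rcases h1.1 with h | h
      · exact h
      · exact absurd h (lt_irrefl 0)
    -- integer inequalities: ℓ - T < u*(k-1) < ℓ
    have hlow : ℓ - T < u * (k - 1) := by linarith
    have hhigh : u * (k - 1) < ℓ := by linarith [h2'.1]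
    -- rational versions
    have hlowQ : ((ℓ - T : ℤ) : ℚ) / (u : ℚ) < ((k : ℚ) - 1) := by
      rw [div_lt_iff₀ hu0]
      have : ((ℓ - T : ℤ) : ℚ) < ((u * (k - 1) : ℤ) : ℚ) := by exact_mod_cast hlow
      push_cast at this ⊢
      linarith
    have hhighQ : ((k : ℚ) - 1) < (ℓ : ℚ) / (u : ℚ) := by
      rw [lt_div_iff₀ hu0]
      have : ((u * (k - 1) : ℤ) : ℚ) < ((ℓ : ℤ) : ℚ) := by exact_mod_cast hhigh
      push_cast at this ⊢
      linarith
    constructor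
    · -- f + 2 ≤ k
      have h1 : (f : ℚ) ≤ ((ℓ - T : ℤ) : ℚ) / (u : ℚ) := Int.floor_le _
      have : (f : ℚ) < (k : ℚ) - 1 := lt_of_le_of_lt h1 hlowQ
      have : f < k - 1 := by exact_mod_cast (by push_cast; linarith : (f : ℚ) < ((k - 1 : ℤ) : ℚ))
      omega
    · -- k ≤ c
      have h1 : (ℓ : ℚ) / (u : ℚ) ≤ (c : ℚ) := Int.le_ceil _
      have : ((k - 1 : ℤ) : ℚ) < (c : ℚ) := by push_cast; linarith
      have : k - 1 < c := by exact_mod_cast this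
      omega
  have hcard := Finset.card_le_card hsub
  have hIcc : (Finset.Icc (f + 2) c).card = (c + 1 - (f + 2)).toNat := Int.card_Icc _ _
  have hkey : c ≤ f + 1 + ⌈(T : ℚ) / (u : ℚ)⌉ := by
    have hsplit : (ℓ : ℚ) / (u : ℚ) = ((ℓ - T : ℤ) : ℚ) / (u : ℚ) + (T : ℚ) / (u : ℚ) := by
      push_cast; ring
    calc c = ⌈((ℓ - T : ℤ) : ℚ) / (u : ℚ) + (T : ℚ) / (u : ℚ)⌉ := by rw [hc, hsplit]
      _ ≤ ⌈((ℓ - T : ℤ) : ℚ) / (u : ℚ)⌉ + ⌈(T : ℚ) / (u : ℚ)⌉ := Int.ceil_add_le _ _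
      _ ≤ f + 1 + ⌈(T : ℚ) / (u : ℚ)⌉ := by
          have := Int.ceil_le_floor_add_one (((ℓ - T : ℤ) : ℚ) / (u : ℚ))
          omega
  have hpos : 0 < ⌈(T : ℚ) / (u : ℚ)⌉ := by
    apply Int.ceil_pos.mpr
    positivity
  calc (((Finset.Icc (1 : ℤ) K).filter
      (fun k => 0 < forcingDAS_S T u k ℓ ∧ forcingDAS_S T u k ℓ < T)).card : ℤ)
      ≤ ((Finset.Icc (f + 2) c).card : ℤ) := by exact_mod_cast hcard
    _ = ((c + 1 - (f + 2)).toNat : ℤ) := by rw [hIcc]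
    _ ≤ ⌈(T : ℚ) / (u : ℚ)⌉ := by
        rcases le_or_gt (c + 1 - (f + 2)) 0 with h | h
        · rw [Int.toNat_of_nonpos h]; omega
        · rw [Int.toNat_of_nonneg h.le]; omega
end

section
/- Sample-form (energy-kernel) identity for the ensemble CRPS: let M ≥ 1 be an integer, x₁, …, x_M ∈ ℝ an ensemble, and y ∈ ℝ. Let F be the empirical CDF F(z) = (1/M)·#{i : x_i ≤ z}. Then the Lebesgue integral over z ∈ ℝ of (F(z) − 1{y ≤ z})² equals (1/M)·Σ_{i=1}^{M} |x_i − y| − (1/(2M²))·Σ_{i=1}^{M} Σ_{j=1}^{M} |x_i − x_j|; that is, the CRPS of the empirical forecast distribution equals the mean absolute deviation of the samples from the truth minus half the mean pairwise spread. -/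
open MeasureTheory


set_option linter.unreachableTactic false
set_option linter.unusedTactic false


noncomputable def stp (a z : ℝ) : ℝ := if a ≤ z then 1 else 0

lemma ico_int (c d : ℝ) (h : c ≤ d) :
    ∫ z : ℝ, (Set.Ico c d).indicator (fun _ => (1:ℝ)) z = d - c := by
  rw [MeasureTheory.integral_indicator measurableSet_Ico]
  simp [Real.volume_Ico, ENNReal.toReal_ofReal (by linarith : (0:ℝ) ≤ d - c), h]

lemma ico_integrable (c d : ℝ) :
    Integrable ((Set.Ico c d).indicator (fun _ => (1:ℝ))) := by
  rw [integrable_indicator_iff measurableSet_Ico]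
  exact (integrableOn_const_iff (by simp)).mpr (Or.inr measure_Ico_lt_top)


lemma prod1 (a b y : ℝ) (h1 : y ≤ a) (h2 : a ≤ b) :
    (fun z => (stp a z - stp y z) * (stp b z - stp y z))
      = (Set.Ico y a).indicator (fun _ => (1:ℝ)) := by
  funext z
  by_cases ha : a ≤ z <;> by_cases hy : y ≤ z <;> by_cases hb : b ≤ z <;>
    simp [stp, Set.indicator_apply, Set.mem_Ico, ha, hy, hb] <;>
    first | rfl | linarith | (intro h; linarith) | (rw [if_pos (by linarith)]) | (rw [if_neg (by linarith)])

lemma prod2 (a b y : ℝ) (h1 : a ≤ y) (h2 : y ≤ b) :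
    (fun z => (stp a z - stp y z) * (stp b z - stp y z)) = fun _ => (0:ℝ) := by
  funext z
  by_cases ha : a ≤ z <;> by_cases hy : y ≤ z <;> by_cases hb : b ≤ z <;>
    simp [stp, ha, hy, hb] <;> first | rfl | linarith | (intro h; linarith) | (rw [if_pos (by linarith)]) | (rw [if_neg (by linarith)])

lemma prod3 (a b y : ℝ) (h1 : b ≤ y) (h2 : a ≤ b) :
    (fun z => (stp a z - stp y z) * (stp b z - stp y z))
      = (Set.Ico b y).indicator (fun _ => (1:ℝ)) := by
  funext z
  by_cases ha : a ≤ z <;> by_cases hy : y ≤ z <;> by_cases hb : b ≤ z <;>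
    simp [stp, Set.indicator_apply, Set.mem_Ico, ha, hy, hb] <;>
    first | rfl | linarith | (intro h; linarith) | (rw [if_pos (by linarith)]) | (rw [if_neg (by linarith)])

lemma kern_le (a b y : ℝ) (hab : a ≤ b) :
    Integrable (fun z => (stp a z - stp y z) * (stp b z - stp y z)) ∧
    ∫ z : ℝ, (stp a z - stp y z) * (stp b z - stp y z)
      = (|a - y| + |b - y| - |a - b|) / 2 := by
  rcases le_total y a with h | h
  · rw [prod1 a b y h hab]
    refine ⟨ico_integrable y a, ?_⟩
    rw [ico_int y a h, abs_of_nonneg (by linarith : (0:ℝ) ≤ a - y),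
      abs_of_nonneg (by linarith : (0:ℝ) ≤ b - y),
      abs_of_nonpos (by linarith : a - b ≤ (0:ℝ))]
    ring
  · rcases le_total y b with h2 | h2
    · rw [prod2 a b y h h2]
      refine ⟨integrable_zero _ _ _, ?_⟩
      rw [integral_zero, abs_of_nonpos (by linarith : a - y ≤ (0:ℝ)),
        abs_of_nonneg (by linarith : (0:ℝ) ≤ b - y),
        abs_of_nonpos (by linarith : a - b ≤ (0:ℝ))]
      ring
    · rw [prod3 a b y h2 hab]
      refine ⟨ico_integrable b y, ?_⟩
      rw [ico_int b y h2, abs_of_nonpos (by linarith : a - y ≤ (0:ℝ)),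
        abs_of_nonpos (by linarith : b - y ≤ (0:ℝ)),
        abs_of_nonpos (by linarith : a - b ≤ (0:ℝ))]
      ring

lemma kern (a b y : ℝ) :
    Integrable (fun z => (stp a z - stp y z) * (stp b z - stp y z)) ∧
    ∫ z : ℝ, (stp a z - stp y z) * (stp b z - stp y z)
      = (|a - y| + |b - y| - |a - b|) / 2 := by
  rcases le_total a b with hab | hab
  · exact kern_le a b y hab
  · have hc : (fun z => (stp a z - stp y z) * (stp b z - stp y z))
        = fun z => (stp b z - stp y z) * (stp a z - stp y z) := by
      funext z; ring
    rw [hc, abs_sub_comm a b, add_comm (|a - y|)]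
    exact kern_le b a y hab

/-- Sample-form (energy-kernel) identity for the ensemble CRPS: for the
empirical CDF `F(z) = (1/M)·#{i : xᵢ ≤ z}` of an ensemble `x₁, …, x_M`, the
CRPS `∫ (F(z) − 1{y ≤ z})² dz` equals the mean absolute deviation of the
samples from the truth minus half the mean pairwise spread. -/
theorem crps_ensemble_energy_form (M : ℕ) (hM : 1 ≤ M) (x : Fin M → ℝ) (y : ℝ) :
    ∫ z : ℝ,
        (((Finset.univ.filter (fun i : Fin M => x i ≤ z)).card : ℝ) / M
          - (if y ≤ z then (1 : ℝ) else 0)) ^ 2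
      = (1 / M) * ∑ i : Fin M, |x i - y|
        - (1 / (2 * (M : ℝ) ^ 2)) * ∑ i : Fin M, ∑ j : Fin M, |x i - x j| := by
  have hM0 : (M : ℝ) ≠ 0 := by positivity
  have hrw : (fun z : ℝ =>
      (((Finset.univ.filter (fun i : Fin M => x i ≤ z)).card : ℝ) / M
          - (if y ≤ z then (1 : ℝ) else 0)) ^ 2)
      = fun z => (1 / (M:ℝ)^2) *
          ∑ i : Fin M, ∑ j : Fin M, (stp (x i) z - stp y z) * (stp (x j) z - stp y z) := by
    funext z
    have hcard : ((Finset.univ.filter (fun i : Fin M => x i ≤ z)).card : ℝ)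
        = ∑ i : Fin M, stp (x i) z := by
      rw [Finset.card_filter]
      push_cast
      simp [stp]
    have hite : (if y ≤ z then (1:ℝ) else 0) = stp y z := rfl
    rw [hcard, hite]
    rw [← Finset.sum_mul_sum]
    have hs : (∑ i : Fin M, stp (x i) z) / M - stp y z
        = (1/(M:ℝ)) * ∑ i : Fin M, (stp (x i) z - stp y z) := by
      rw [Finset.sum_sub_distrib, Finset.sum_const, Finset.card_univ, Fintype.card_fin,
        nsmul_eq_mul]
      field_simp
    rw [hs]
    ring
  rw [hrw, MeasureTheory.integral_const_mul, integral_finset_sum _ (fun i _ =>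
      integrable_finset_sum _ (fun j _ => (kern (x i) (x j) y).1))]
  have : ∀ i : Fin M, ∫ z : ℝ, ∑ j : Fin M, (stp (x i) z - stp y z) * (stp (x j) z - stp y z)
      = ∑ j : Fin M, (|x i - y| + |x j - y| - |x i - x j|) / 2 := by
    intro i
    rw [integral_finset_sum _ (fun j _ => (kern (x i) (x j) y).1)]
    exact Finset.sum_congr rfl (fun j _ => (kern (x i) (x j) y).2)
  simp only [this]
  have e1 : ∀ i : Fin M, ∑ j : Fin M, (|x i - y| + |x j - y| - |x i - x j|) / 2
      = ((M:ℝ) * |x i - y| + (∑ j : Fin M, |x j - y|) - ∑ j : Fin M, |x i - x j|) / 2 := by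
    intro i
    rw [← Finset.sum_div, Finset.sum_sub_distrib, Finset.sum_add_distrib, Finset.sum_const,
      Finset.card_univ, Fintype.card_fin, nsmul_eq_mul]
  simp only [e1]
  rw [← Finset.sum_div, Finset.sum_sub_distrib, Finset.sum_add_distrib, ← Finset.mul_sum,
    Finset.sum_const, Finset.card_univ, Fintype.card_fin, nsmul_eq_mul]
  field_simp
  ring
end
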